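/- arXiv:1510.07379 — 2 statements merged into one kernel-verified Lean document; each statement's English description precedes it below -/
import Mathlib

section
/- Let A ∈ ℂ^{n×N}, let x0, x ∈ ℝ^n ⊆ ℂ^n satisfy ⟨x0, x⟩ > 0, and let γ = (1−t) x0 + t x ∈ ℝ^n for some t ∈ [0,1] (a convex combination, necessarily nonzero). Define λ̃2(γ) = sup{ ‖Im(B_γ^* u)‖ : u ∈ ℝ^n, ⟨u, γ⟩ = 0, ‖u‖ = 1 }. Then ‖Im(B_γ^* (x − x0))‖ ≤ λ̃2(γ) · ‖x − x0‖. -/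
/-!
Since `conj (phase z) * z = ‖z‖` is real, the ℝ-linear map `u ↦ Im (B_γ^* u)` vanishes at `γ`.
So its value at `d = x - x0` equals its value at the component `w` of `d` orthogonal to `γ`;
`w` is real with `‖w‖ ≤ ‖d‖`, and by homogeneity its value has norm at most `λ̃₂(γ) ‖w‖`.
-/

noncomputable def phase (z : ℂ) : ℂ := if z = 0 then 1 else z / (‖z‖ : ℂ)

theorem conj_phase_mul_self (z : ℂ) : (starRingEnd ℂ) (phase z) * z = (‖z‖ : ℂ) := by
  unfold phase
  split_ifs with h
  · simp [h]
  · have : (‖z‖ : ℂ) ≠ 0 := by exact_mod_cast norm_ne_zero_iff.2 h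
    rw [map_div₀, Complex.conj_ofReal, div_mul_eq_mul_div, mul_comm, Complex.mul_conj']
    field_simp

section
variable {E F : Type*} [NormedAddCommGroup E] [SeminormedAddCommGroup F] [NormedSpace ℝ F]

namespace ContinuousLinearMap

theorem norm_apply_le_sSup_unit_mul_norm [NormedSpace ℝ E] (L : E →L[ℝ] F) (P : Submodule ℝ E)
    {u : E} (hu : u ∈ P) : ‖L u‖ ≤ sSup {r | ∃ v ∈ P, ‖v‖ = 1 ∧ r = ‖L v‖} * ‖u‖ := by
  rcases eq_or_ne u 0 with rfl | hu0
  · simp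
  have hbdd : BddAbove {r | ∃ v ∈ P, ‖v‖ = 1 ∧ r = ‖L v‖} := by
    refine ⟨‖L‖, ?_⟩
    rintro r ⟨v, -, hv, rfl⟩
    simpa [hv] using L.le_opNorm v
  have hunit : ‖‖u‖⁻¹ • u‖ = 1 := by
    rw [norm_smul, norm_inv, norm_norm, inv_mul_cancel₀ (norm_ne_zero_iff.2 hu0)]
  have hle := le_csSup hbdd ⟨_, P.smul_mem _ hu, hunit, rfl⟩
  calc ‖L u‖ = ‖L (‖u‖⁻¹ • u)‖ * ‖u‖ := by
        rw [map_smul, norm_smul, norm_inv, norm_norm]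
        field_simp
    _ ≤ _ := by gcongr

theorem norm_apply_le_sSup_orthogonal_mul_norm [InnerProductSpace ℝ E] (L : E →L[ℝ] F) {γ : E}
    (hLγ : L γ = 0) (d : E) :
    ‖L d‖ ≤ sSup {r | ∃ v ∈ (ℝ ∙ γ)ᗮ, ‖v‖ = 1 ∧ r = ‖L v‖} * ‖d‖ := by
  have hsup : 0 ≤ sSup {r | ∃ v ∈ (ℝ ∙ γ)ᗮ, ‖v‖ = 1 ∧ r = ‖L v‖} :=
    Real.sSup_nonneg (by rintro r ⟨v, -, -, rfl⟩; exact norm_nonneg _)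
  have hker : L ((ℝ ∙ γ).starProjection d) = 0 := by
    obtain ⟨c, hc⟩ := Submodule.mem_span_singleton.1 ((ℝ ∙ γ).starProjection_apply_mem d)
    rw [← hc, map_smul, hLγ, smul_zero]
  calc ‖L d‖ = ‖L ((ℝ ∙ γ)ᗮ.starProjection d)‖ := by
        rw [Submodule.starProjection_orthogonal_val, map_sub, hker, sub_zero]
    _ ≤ _ * ‖(ℝ ∙ γ)ᗮ.starProjection d‖ :=
        L.norm_apply_le_sSup_unit_mul_norm _ ((ℝ ∙ γ)ᗮ.starProjection_apply_mem d)
    _ ≤ _ := by gcongr; exact Submodule.norm_starProjection_apply_le _ d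

end ContinuousLinearMap
end

namespace EuclideanSpace
variable {n : ℕ}

/-- `EuclideanSpace ℂ (Fin n)` has no real inner product instance (it would be a diamond), so real
vectors of `ℂⁿ` are handled as elements of `ℝⁿ` through this embedding. -/
noncomputable def complexify (n : ℕ) :
    EuclideanSpace ℝ (Fin n) →ₗ[ℝ] EuclideanSpace ℂ (Fin n) where
  toFun v := WithLp.toLp 2 fun i => (v i : ℂ)
  map_add' u v := by ext i; simp
  map_smul' c v := by ext i; simp

@[simp]
theorem complexify_apply (v : EuclideanSpace ℝ (Fin n)) (i : Fin n) :
    complexify n v i = (v i : ℂ) := rfl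

theorem mem_range_complexify_iff {u : EuclideanSpace ℂ (Fin n)} :
    u ∈ LinearMap.range (complexify n) ↔ ∀ i, (u i).im = 0 := by
  refine ⟨?_, fun hu => ⟨WithLp.toLp 2 fun i => (u i).re, ?_⟩⟩
  · rintro ⟨v, rfl⟩ i
    simp
  · ext i
    simp [Complex.ext_iff, hu i]

@[simp]
theorem inner_complexify (u v : EuclideanSpace ℝ (Fin n)) :
    inner ℂ (complexify n u) (complexify n v) = (inner ℝ u v : ℂ) := by
  simp [PiLp.inner_apply]

@[simp]
theorem norm_complexify (v : EuclideanSpace ℝ (Fin n)) : ‖complexify n v‖ = ‖v‖ := by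
  simp [EuclideanSpace.norm_eq]

end EuclideanSpace

section
variable {n N : ℕ} (a : Fin N → EuclideanSpace ℂ (Fin n)) (y : EuclideanSpace ℂ (Fin n))

/-- `ζ ↦ Im (B_y^* ζ)` for `B_y = A · diag (phase (A^* y))`, where `a j` are the columns of `A`. -/
noncomputable def imBStar : EuclideanSpace ℂ (Fin n) →ₗ[ℝ] EuclideanSpace ℝ (Fin N) where
  toFun ζ := WithLp.toLp 2 fun j =>
    ((starRingEnd ℂ) (phase (inner ℂ (a j) y)) * inner ℂ (a j) ζ).im
  map_add' u v := by ext j; simp [mul_add]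
  map_smul' c v := by ext j; simp [mul_left_comm]

@[simp]
theorem imBStar_apply (ζ : EuclideanSpace ℂ (Fin n)) (j : Fin N) :
    imBStar a y ζ j = ((starRingEnd ℂ) (phase (inner ℂ (a j) y)) * inner ℂ (a j) ζ).im := rfl

theorem imBStar_self : imBStar a y y = 0 := by
  ext j
  simp [conj_phase_mul_self]

end

theorem real_second_singular_value_bound_general {n N : ℕ}
    (a : Fin N → EuclideanSpace ℂ (Fin n))
    (x0 x : EuclideanSpace ℂ (Fin n))
    (hx0real : ∀ i, (x0 i).im = 0) (hxreal : ∀ i, (x i).im = 0)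
    (t : ℝ)
    (γ : EuclideanSpace ℂ (Fin n)) (hγ : γ = (1 - t) • x0 + t • x)
    (Bstar : EuclideanSpace ℂ (Fin n) → EuclideanSpace ℂ (Fin n) → Fin N → ℂ)
    (hB : ∀ y ζ j, Bstar y ζ j =
      (starRingEnd ℂ) (phase (inner ℂ (a j) y : ℂ)) * (inner ℂ (a j) ζ : ℂ))
    (lam : ℝ)
    (hlam : lam = sSup {r : ℝ | ∃ u : EuclideanSpace ℂ (Fin n),
      (∀ i, (u i).im = 0) ∧ (inner ℂ u γ : ℂ).re = 0 ∧ ‖u‖ = 1 ∧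
      r = Real.sqrt (∑ j, ((Bstar γ u j).im) ^ 2)}) :
    Real.sqrt (∑ j, ((Bstar γ (x - x0) j).im) ^ 2) ≤ lam * ‖x - x0‖ := by
  obtain ⟨x0, rfl⟩ := EuclideanSpace.mem_range_complexify_iff.2 hx0real
  obtain ⟨x, rfl⟩ := EuclideanSpace.mem_range_complexify_iff.2 hxreal
  set ι := EuclideanSpace.complexify n
  obtain rfl : γ = ι ((1 - t) • x0 + t • x) := by simp [hγ]
  set γ := (1 - t) • x0 + t • x
  let L := (imBStar a (ι γ) ∘ₗ ι).toContinuousLinearMap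
  have hnorm (v : EuclideanSpace ℝ (Fin n)) :
      √(∑ j, (Bstar (ι γ) (ι v) j).im ^ 2) = ‖L v‖ := by
    simp [L, EuclideanSpace.norm_eq, hB, ι]
  have hlam' : lam = sSup {r | ∃ v ∈ (ℝ ∙ γ)ᗮ, ‖v‖ = 1 ∧ r = ‖L v‖} := by
    simp_rw [hlam, ← EuclideanSpace.mem_range_complexify_iff, LinearMap.mem_range,
      Submodule.mem_orthogonal_singleton_iff_inner_left]
    simp [hnorm, ι]
  rw [← map_sub, hnorm, EuclideanSpace.norm_complexify, hlam']
  exact L.norm_apply_le_sSup_orthogonal_mul_norm (imBStar_self a _) _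

/-- real version of the second-singular-value bound. If `x0, x` are real
vectors with `⟨x0, x⟩ > 0` and `γ = (1-t)x0 + tx` is a convex combination, then
`‖Im(B_γ^* (x - x0))‖ ≤ λ̃2(γ) ‖x - x0‖`, where
`(B_γ^* ζ) j = conj(phase(a_j^* γ))·(a_j^* ζ)` (columns `a j` of `A`) and
`λ̃2(γ) = sup{‖Im(B_γ^* u)‖ : u real, ⟨u, γ⟩ = 0, ‖u‖ = 1}`. -/
theorem real_second_singular_value_bound {n N : ℕ}
    (a : Fin N → EuclideanSpace ℂ (Fin n))
    (x0 x : EuclideanSpace ℂ (Fin n))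
    (hx0real : ∀ i, (x0 i).im = 0) (hxreal : ∀ i, (x i).im = 0)
    (hpos : 0 < (inner ℂ x0 x : ℂ).re)
    (t : ℝ) (ht0 : 0 ≤ t) (ht1 : t ≤ 1)
    (γ : EuclideanSpace ℂ (Fin n)) (hγ : γ = (1 - t) • x0 + t • x)
    (Bstar : EuclideanSpace ℂ (Fin n) → EuclideanSpace ℂ (Fin n) → Fin N → ℂ)
    (hB : ∀ y ζ j, Bstar y ζ j =
      (starRingEnd ℂ) (phase (inner ℂ (a j) y : ℂ)) * (inner ℂ (a j) ζ : ℂ))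
    (lam : ℝ)
    (hlam : lam = sSup {r : ℝ | ∃ u : EuclideanSpace ℂ (Fin n),
      (∀ i, (u i).im = 0) ∧ (inner ℂ u γ : ℂ).re = 0 ∧ ‖u‖ = 1 ∧
      r = Real.sqrt (∑ j, ((Bstar γ u j).im) ^ 2)}) :
    Real.sqrt (∑ j, ((Bstar γ (x - x0) j).im) ^ 2) ≤ lam * ‖x - x0‖ :=
  real_second_singular_value_bound_general a x0 x hx0real hxreal t γ hγ Bstar hB lam hlam
end

section
/- Let x0 ∈ ℂ^n be nonzero and, for l = 1, 2, let A_l ∈ ℂ^{n×M} satisfy A_l A_l^* = I_n, set B_l = A_l · diag(phase(A_l^* x0)) and λ2^{(l)} = sup{ ‖Im(B_l^* u)‖ : u ∈ ℂ^n, ‖u‖ = 1, Im(u^* x0) = 0 }. Define the real-linear maps S_l : ℂ^n → ℂ^n by S_l(ζ) = i · B_l · Im(B_l^* ζ), where Im(B_l^* ζ) ∈ ℝ^M is taken entrywise and regarded as a complex vector. Then for every ζ ∈ ℂ^n with Im(x0^* ζ) = 0, ‖S_2(S_1(ζ))‖ ≤ (λ2^{(1)} · λ2^{(2)})² · ‖ζ‖.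 -/
/-!
Write `c ζ = Im (B^* ζ) ∈ ℝ^M` and `H = {ζ | Im ⟪x0, ζ⟫ = 0}`. Then `Re ⟪u, S ζ⟫ = ⟪c u, c ζ⟫`,
i.e. `S = cᵀ c` for the real structure of `ℂ^n`, and the Parseval identity `A A^* = I` gives
`⟪x0, S ζ⟫ = i Im ⟪x0, ζ⟫`, so `S` maps `H` into itself. On `H` we have `‖c ζ‖ ≤ λ₂ ‖ζ‖` by the
definition of `λ₂`, hence `‖S ζ‖² = ⟪c (S ζ), c ζ⟫ ≤ λ₂² ‖S ζ‖ ‖ζ‖`. So `‖S_l ζ‖ ≤ (λ₂^(l))² ‖ζ‖`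
on `H`, and the two bounds compose.
-/

open scoped InnerProductSpace ComplexConjugate

theorem norm_le_sq_mul_norm_of_re_inner_eq_inner {𝕜 E F : Type*} [RCLike 𝕜]
    [NormedAddCommGroup E] [InnerProductSpace 𝕜 E] [NormedAddCommGroup F] [InnerProductSpace ℝ F]
    {S : E → E} {c : E → F} {H : Set E} {lam : ℝ}
    (hS : ∀ u ζ, RCLike.re ⟪u, S ζ⟫_𝕜 = ⟪c u, c ζ⟫_ℝ) (hSH : Set.MapsTo S H H)
    (hc : ∀ ζ ∈ H, ‖c ζ‖ ≤ lam * ‖ζ‖) {ζ : E} (hζ : ζ ∈ H) :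
    ‖S ζ‖ ≤ lam ^ 2 * ‖ζ‖ := by
  have hSζ := hc _ (hSH hζ)
  have key : ‖S ζ‖ * ‖S ζ‖ ≤ ‖S ζ‖ * (lam ^ 2 * ‖ζ‖) :=
    calc ‖S ζ‖ * ‖S ζ‖ = ⟪c (S ζ), c ζ⟫_ℝ := by rw [← hS, ← sq, ← inner_self_eq_norm_sq (𝕜 := 𝕜)]
      _ ≤ ‖c (S ζ)‖ * ‖c ζ‖ := real_inner_le_norm _ _
      _ ≤ (lam * ‖S ζ‖) * (lam * ‖ζ‖) :=
        mul_le_mul hSζ (hc ζ hζ) (norm_nonneg _) ((norm_nonneg _).trans hSζ)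
      _ = ‖S ζ‖ * (lam ^ 2 * ‖ζ‖) := by ring
  rcases (norm_nonneg (S ζ)).eq_or_lt with h0 | hpos
  · rw [← h0]; positivity
  · exact le_of_mul_le_mul_left key hpos

theorem ofReal_norm_mul_phase (z : ℂ) : (‖z‖ : ℂ) * phase z = z := by
  unfold phase
  split_ifs with h
  · simp [h]
  · exact mul_div_cancel₀ z (by simpa using h)

theorem norm_phase (z : ℂ) : ‖phase z‖ = 1 := by
  unfold phase
  split_ifs with h
  · simp
  · rw [norm_div, Complex.norm_of_nonneg (norm_nonneg z), div_self (norm_ne_zero_iff.mpr h)]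

theorem phase_mul_conj (z : ℂ) : phase z * conj z = ‖z‖ := by
  calc phase z * conj z = phase z * conj ((‖z‖ : ℂ) * phase z) := by rw [ofReal_norm_mul_phase]
    _ = ‖z‖ * (phase z * conj (phase z)) := by rw [map_mul, Complex.conj_ofReal]; ring
    _ = ‖z‖ := by rw [Complex.mul_conj, Complex.normSq_eq_norm_sq, norm_phase]; simp

section ParsevalFrame

variable {n M : ℕ} (x0 : EuclideanSpace ℂ (Fin n)) (a : Fin M → EuclideanSpace ℂ (Fin n))

/-- The real vector `Im (B^* ζ)`, where `B` has the columns `phase ⟪a j, x0⟫ • a j`. -/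
noncomputable def imPhasedCoeffs (ζ : EuclideanSpace ℂ (Fin n)) : EuclideanSpace ℝ (Fin M) :=
  WithLp.toLp 2 fun j => (conj (phase ⟪a j, x0⟫_ℂ) * ⟪a j, ζ⟫_ℂ).im

/-- The derivative `ζ ↦ i B Im (B^* ζ)` of the block AP map at `x0`. -/
noncomputable def sapDeriv (ζ : EuclideanSpace ℂ (Fin n)) : EuclideanSpace ℂ (Fin n) :=
  ∑ j, (Complex.I * ((imPhasedCoeffs x0 a ζ j : ℂ) * phase ⟪a j, x0⟫_ℂ)) • a j

noncomputable def lambda2 : ℝ :=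
  sSup {r | ∃ u : EuclideanSpace ℂ (Fin n), ‖u‖ = 1 ∧ (⟪u, x0⟫_ℂ).im = 0 ∧
    r = ‖imPhasedCoeffs x0 a u‖}

theorem norm_imPhasedCoeffs (ζ : EuclideanSpace ℂ (Fin n)) :
    ‖imPhasedCoeffs x0 a ζ‖ = √(∑ j, (conj (phase ⟪a j, x0⟫_ℂ) * ⟪a j, ζ⟫_ℂ).im ^ 2) := by
  simp only [EuclideanSpace.norm_eq, Real.norm_eq_abs, sq_abs]
  rfl

theorem imPhasedCoeffs_ofReal_smul (r : ℝ) (ζ : EuclideanSpace ℂ (Fin n)) :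
    imPhasedCoeffs x0 a ((r : ℂ) • ζ) = r • imPhasedCoeffs x0 a ζ := by
  ext j
  simp only [imPhasedCoeffs, PiLp.smul_apply, smul_eq_mul]
  rw [inner_smul_right, mul_left_comm, Complex.im_ofReal_mul]

theorem re_inner_sapDeriv (u ζ : EuclideanSpace ℂ (Fin n)) :
    (⟪u, sapDeriv x0 a ζ⟫_ℂ).re = ⟪imPhasedCoeffs x0 a u, imPhasedCoeffs x0 a ζ⟫_ℝ := by
  rw [sapDeriv, inner_sum, Complex.re_sum, PiLp.inner_apply]
  refine Finset.sum_congr rfl fun j _ => ?_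
  rw [inner_smul_right, ← inner_conj_symm u (a j)]
  simp only [imPhasedCoeffs, RCLike.inner_apply, conj_trivial, Complex.mul_re, Complex.mul_im,
    Complex.I_re, Complex.I_im, Complex.ofReal_re, Complex.ofReal_im, Complex.conj_re,
    Complex.conj_im]
  ring

variable {a}

theorem inner_eq_sum_of_parseval (hparseval : ∀ x, ∑ j, ⟪a j, x⟫_ℂ • a j = x)
    (u ζ : EuclideanSpace ℂ (Fin n)) :
    ⟪u, ζ⟫_ℂ = ∑ j, conj ⟪a j, u⟫_ℂ * ⟪a j, ζ⟫_ℂ := by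
  conv_lhs => rw [← hparseval ζ]
  simp only [inner_sum, inner_smul_right, inner_conj_symm, mul_comm]

theorem norm_sq_eq_sum_of_parseval (hparseval : ∀ x, ∑ j, ⟪a j, x⟫_ℂ • a j = x)
    (ζ : EuclideanSpace ℂ (Fin n)) :
    ‖ζ‖ ^ 2 = ∑ j, ‖⟪a j, ζ⟫_ℂ‖ ^ 2 := by
  rw [← inner_self_eq_norm_sq (𝕜 := ℂ), RCLike.re_to_complex, inner_eq_sum_of_parseval hparseval,
    Complex.re_sum]
  simp only [Complex.conj_mul']
  norm_cast

theorem norm_imPhasedCoeffs_le (hparseval : ∀ x, ∑ j, ⟪a j, x⟫_ℂ • a j = x)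
    (ζ : EuclideanSpace ℂ (Fin n)) :
    ‖imPhasedCoeffs x0 a ζ‖ ≤ ‖ζ‖ := by
  rw [← sq_le_sq₀ (norm_nonneg _) (norm_nonneg _), EuclideanSpace.norm_sq_eq,
    norm_sq_eq_sum_of_parseval hparseval]
  refine Finset.sum_le_sum fun j _ => ?_
  calc ‖imPhasedCoeffs x0 a ζ j‖ ^ 2 ≤ ‖conj (phase ⟪a j, x0⟫_ℂ) * ⟪a j, ζ⟫_ℂ‖ ^ 2 := by
        gcongr; exact Complex.abs_im_le_norm _
    _ = ‖⟪a j, ζ⟫_ℂ‖ ^ 2 := by rw [norm_mul, RCLike.norm_conj, norm_phase, one_mul]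

theorem inner_sapDeriv (hparseval : ∀ x, ∑ j, ⟪a j, x⟫_ℂ • a j = x)
    (ζ : EuclideanSpace ℂ (Fin n)) :
    ⟪x0, sapDeriv x0 a ζ⟫_ℂ = Complex.I * (⟪x0, ζ⟫_ℂ).im := by
  have him : (⟪x0, ζ⟫_ℂ).im = ∑ j, ‖⟪a j, x0⟫_ℂ‖ * imPhasedCoeffs x0 a ζ j := by
    rw [inner_eq_sum_of_parseval hparseval, Complex.im_sum]
    refine Finset.sum_congr rfl fun j _ => ?_
    rw [← congrArg conj (ofReal_norm_mul_phase ⟪a j, x0⟫_ℂ), map_mul, Complex.conj_ofReal,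
      mul_assoc, Complex.im_ofReal_mul]
    rfl
  rw [him, sapDeriv, inner_sum, Complex.ofReal_sum, Finset.mul_sum]
  refine Finset.sum_congr rfl fun j _ => ?_
  rw [inner_smul_right, ← inner_conj_symm x0 (a j), mul_assoc, mul_assoc, phase_mul_conj]
  push_cast
  ring

theorem im_inner_sapDeriv (hparseval : ∀ x, ∑ j, ⟪a j, x⟫_ℂ • a j = x)
    (ζ : EuclideanSpace ℂ (Fin n)) :
    (⟪x0, sapDeriv x0 a ζ⟫_ℂ).im = (⟪x0, ζ⟫_ℂ).im := by
  simp [inner_sapDeriv x0 hparseval]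

theorem norm_imPhasedCoeffs_le_lambda2_mul (hparseval : ∀ x, ∑ j, ⟪a j, x⟫_ℂ • a j = x)
    {ζ : EuclideanSpace ℂ (Fin n)} (hζ : (⟪x0, ζ⟫_ℂ).im = 0) :
    ‖imPhasedCoeffs x0 a ζ‖ ≤ lambda2 x0 a * ‖ζ‖ := by
  rcases eq_or_ne ζ 0 with rfl | hζ0
  · simpa using norm_imPhasedCoeffs_le x0 hparseval 0
  have hbdd : BddAbove {r | ∃ u : EuclideanSpace ℂ (Fin n), ‖u‖ = 1 ∧ (⟪u, x0⟫_ℂ).im = 0 ∧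
      r = ‖imPhasedCoeffs x0 a u‖} := by
    refine ⟨1, ?_⟩
    rintro _ ⟨u, hu, -, rfl⟩
    exact hu ▸ norm_imPhasedCoeffs_le x0 hparseval u
  have hmem := le_csSup hbdd ⟨((‖ζ‖⁻¹ : ℝ) : ℂ) • ζ, ?_, ?_, rfl⟩
  · rw [imPhasedCoeffs_ofReal_smul, norm_smul, Real.norm_eq_abs, abs_inv, abs_norm,
      inv_mul_le_iff₀ (norm_pos_iff.mpr hζ0)] at hmem
    exact hmem.trans_eq (mul_comm _ _)
  · simpa using norm_smul_inv_norm (𝕜 := ℂ) hζ0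
  · rw [inner_smul_left, Complex.conj_ofReal, Complex.im_ofReal_mul, ← inner_conj_symm,
      Complex.conj_im, hζ, neg_zero, mul_zero]

theorem norm_sapDeriv_le (hparseval : ∀ x, ∑ j, ⟪a j, x⟫_ℂ • a j = x)
    {ζ : EuclideanSpace ℂ (Fin n)} (hζ : (⟪x0, ζ⟫_ℂ).im = 0) :
    ‖sapDeriv x0 a ζ‖ ≤ lambda2 x0 a ^ 2 * ‖ζ‖ :=
  norm_le_sq_mul_norm_of_re_inner_eq_inner (𝕜 := ℂ) (H := {ξ | (⟪x0, ξ⟫_ℂ).im = 0})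
    (re_inner_sapDeriv x0 a) (fun ξ hξ => (im_inner_sapDeriv x0 hparseval ξ).trans hξ)
    (fun _ hξ => norm_imPhasedCoeffs_le_lambda2_mul x0 hparseval hξ) hζ

end ParsevalFrame

theorem SAP_derivative_composition_bound_general {n M : ℕ}
    (x0 : EuclideanSpace ℂ (Fin n))
    (a1 a2 : Fin M → EuclideanSpace ℂ (Fin n))
    (hiso1 : ∀ x : EuclideanSpace ℂ (Fin n), ∑ j, (inner ℂ (a1 j) x : ℂ) • a1 j = x)
    (hiso2 : ∀ x : EuclideanSpace ℂ (Fin n), ∑ j, (inner ℂ (a2 j) x : ℂ) • a2 j = x)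
    (S1 S2 : EuclideanSpace ℂ (Fin n) → EuclideanSpace ℂ (Fin n))
    (hS1 : ∀ ζ, S1 ζ = ∑ j, (Complex.I *
      ((((starRingEnd ℂ) (phase (inner ℂ (a1 j) x0 : ℂ)) * (inner ℂ (a1 j) ζ : ℂ)).im : ℂ) *
        phase (inner ℂ (a1 j) x0 : ℂ))) • a1 j)
    (hS2 : ∀ ζ, S2 ζ = ∑ j, (Complex.I *
      ((((starRingEnd ℂ) (phase (inner ℂ (a2 j) x0 : ℂ)) * (inner ℂ (a2 j) ζ : ℂ)).im : ℂ) *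
        phase (inner ℂ (a2 j) x0 : ℂ))) • a2 j)
    (lam1 lam2 : ℝ)
    (hlam1 : lam1 = sSup {r : ℝ | ∃ u : EuclideanSpace ℂ (Fin n), ‖u‖ = 1 ∧
      (inner ℂ u x0 : ℂ).im = 0 ∧
      r = Real.sqrt (∑ j, (((starRingEnd ℂ) (phase (inner ℂ (a1 j) x0 : ℂ)) *
        (inner ℂ (a1 j) u : ℂ)).im) ^ 2)})
    (hlam2 : lam2 = sSup {r : ℝ | ∃ u : EuclideanSpace ℂ (Fin n), ‖u‖ = 1 ∧
      (inner ℂ u x0 : ℂ).im = 0 ∧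
      r = Real.sqrt (∑ j, (((starRingEnd ℂ) (phase (inner ℂ (a2 j) x0 : ℂ)) *
        (inner ℂ (a2 j) u : ℂ)).im) ^ 2)}) :
    ∀ ζ : EuclideanSpace ℂ (Fin n), (inner ℂ x0 ζ : ℂ).im = 0 →
      ‖S2 (S1 ζ)‖ ≤ (lam1 * lam2) ^ 2 * ‖ζ‖ := by
  intro ζ hζ
  obtain rfl : S1 = sapDeriv x0 a1 := funext hS1
  obtain rfl : S2 = sapDeriv x0 a2 := funext hS2
  obtain rfl : lam1 = lambda2 x0 a1 := by simp only [hlam1, lambda2, norm_imPhasedCoeffs]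
  obtain rfl : lam2 = lambda2 x0 a2 := by simp only [hlam2, lambda2, norm_imPhasedCoeffs]
  calc ‖sapDeriv x0 a2 (sapDeriv x0 a1 ζ)‖
    _ ≤ lambda2 x0 a2 ^ 2 * ‖sapDeriv x0 a1 ζ‖ :=
        norm_sapDeriv_le x0 hiso2 ((im_inner_sapDeriv x0 hiso1 ζ).trans hζ)
    _ ≤ lambda2 x0 a2 ^ 2 * (lambda2 x0 a1 ^ 2 * ‖ζ‖) := by
        gcongr; exact norm_sapDeriv_le x0 hiso1 hζ
    _ = (lambda2 x0 a1 * lambda2 x0 a2) ^ 2 * ‖ζ‖ := by ring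

/-- norm bound for the composition of the SAP block derivatives. For
`l = 1, 2`, `A_l` (with columns `a_l j`) satisfying `A_l A_l^* = I` (Parseval frame
condition), `B_l = A_l diag(phase(A_l^* x0))`,
`λ2^(l) = sup{‖Im(B_l^* u)‖ : ‖u‖ = 1, Im(u^* x0) = 0}`, and the real-linear maps
`S_l ζ = i·B_l·Im(B_l^* ζ)`: for every `ζ` with `Im(x0^* ζ) = 0`,
`‖S_2(S_1 ζ)‖ ≤ (λ2^(1)·λ2^(2))² ‖ζ‖`. -/
theorem SAP_derivative_composition_bound {n M : ℕ}
    (x0 : EuclideanSpace ℂ (Fin n)) (hx0 : x0 ≠ 0)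
    (a1 a2 : Fin M → EuclideanSpace ℂ (Fin n))
    (hiso1 : ∀ x : EuclideanSpace ℂ (Fin n), ∑ j, (inner ℂ (a1 j) x : ℂ) • a1 j = x)
    (hiso2 : ∀ x : EuclideanSpace ℂ (Fin n), ∑ j, (inner ℂ (a2 j) x : ℂ) • a2 j = x)
    (S1 S2 : EuclideanSpace ℂ (Fin n) → EuclideanSpace ℂ (Fin n))
    (hS1 : ∀ ζ, S1 ζ = ∑ j, (Complex.I *
      ((((starRingEnd ℂ) (phase (inner ℂ (a1 j) x0 : ℂ)) * (inner ℂ (a1 j) ζ : ℂ)).im : ℂ) *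
        phase (inner ℂ (a1 j) x0 : ℂ))) • a1 j)
    (hS2 : ∀ ζ, S2 ζ = ∑ j, (Complex.I *
      ((((starRingEnd ℂ) (phase (inner ℂ (a2 j) x0 : ℂ)) * (inner ℂ (a2 j) ζ : ℂ)).im : ℂ) *
        phase (inner ℂ (a2 j) x0 : ℂ))) • a2 j)
    (lam1 lam2 : ℝ)
    (hlam1 : lam1 = sSup {r : ℝ | ∃ u : EuclideanSpace ℂ (Fin n), ‖u‖ = 1 ∧
      (inner ℂ u x0 : ℂ).im = 0 ∧
      r = Real.sqrt (∑ j, (((starRingEnd ℂ) (phase (inner ℂ (a1 j) x0 : ℂ)) *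
        (inner ℂ (a1 j) u : ℂ)).im) ^ 2)})
    (hlam2 : lam2 = sSup {r : ℝ | ∃ u : EuclideanSpace ℂ (Fin n), ‖u‖ = 1 ∧
      (inner ℂ u x0 : ℂ).im = 0 ∧
      r = Real.sqrt (∑ j, (((starRingEnd ℂ) (phase (inner ℂ (a2 j) x0 : ℂ)) *
        (inner ℂ (a2 j) u : ℂ)).im) ^ 2)}) :
    ∀ ζ : EuclideanSpace ℂ (Fin n), (inner ℂ x0 ζ : ℂ).im = 0 →
      ‖S2 (S1 ζ)‖ ≤ (lam1 * lam2) ^ 2 * ‖ζ‖ :=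
  SAP_derivative_composition_bound_general x0 a1 a2 hiso1 hiso2 S1 S2 hS1 hS2 lam1 lam2 hlam1 hlam2
end
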